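/- arXiv:1706.02167 — 5 statements merged into one kernel-verified Lean document; each statement's English description precedes it below -/
import Mathlib

section
/- Setting $y_j = 0$ for all $j$: the polynomials ${}^n c_p := \sum_{j=0}^p c_{p-j} e_j(x_1,\ldots,x_n)$ satisfy $({}^n c_p)^2 + 2\sum_{i=1}^p (-1)^i ({}^n c_{p+i})({}^n c_{p-i}) = e_p(x_1^2, \ldots, x_n^2)$ for all $p \geq 0$, in $\Gamma[x_1,\ldots,x_n]$. -/
noncomputable section
open MvPolynomial

/-- The element `c_p` of the free polynomial ring `ℤ[c_1, c_2, …]`, with the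
conventions `c_0 = 1` and `c_p = 0` for `p < 0`. -/
def cFree : ℤ → MvPolynomial ℕ ℤ := fun p =>
  if p ≤ 0 then (if p = 0 then 1 else 0) else X (p.toNat - 1)

/-- The relation `c_p² + 2 ∑_{i=1}^p (-1)^i c_{p+i} c_{p-i}`. -/
def relC (p : ℕ) : MvPolynomial ℕ ℤ :=
  cFree (p : ℤ) ^ 2 +
    2 * ∑ i ∈ Finset.Icc 1 p,
      (-1 : MvPolynomial ℕ ℤ) ^ i * cFree ((p : ℤ) + i) * cFree ((p : ℤ) - i)

/-- The ideal generated by the relations `relC p` for `p ≥ 1`. -/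
def IGam : Ideal (MvPolynomial ℕ ℤ) := Ideal.span {f | ∃ p : ℕ, 1 ≤ p ∧ f = relC p}

/-- The ring `Γ`. -/
abbrev GammaR := MvPolynomial ℕ ℤ ⧸ IGam

/-- The class of `c_p` in `Γ`. -/
def cQ : ℤ → GammaR := fun p => Ideal.Quotient.mk IGam (cFree p)

/-- The elementary symmetric polynomial `e_j` evaluated at the family `v i`,
`i ∈ s`. -/
def esymF {R : Type*} [CommRing R] {σ : Type*} [DecidableEq σ]
    (s : Finset σ) (v : σ → R) (j : ℕ) : R :=
  ∑ t ∈ Finset.powersetCard j s, ∏ i ∈ t, v i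

/-- The complete homogeneous symmetric polynomial `h_j` evaluated at the family
`v i`, `i ∈ s`. -/
def hsymF {R : Type*} [CommRing R] {σ : Type*} [DecidableEq σ]
    (s : Finset σ) (v : σ → R) (j : ℕ) : R :=
  ∑ m ∈ Finset.sym s j, (m.1.map v).prod

/-- `ⁿc_p = ∑_{j=0}^p c_{p-j} e_j(X_n)` in `Γ[x_1,…,x_n]`. -/
def nc (n p : ℕ) : MvPolynomial (Fin n) GammaR :=
  ∑ j ∈ Finset.range (p + 1),
    C (cQ ((p : ℤ) - j)) * esymF Finset.univ X j

/- Write `c(t) = ∑ c_k t^k` and `E(t) = ∏ (1 + x_i t)`. For any power series `f`, the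
coefficient of `t^(2p)` in `f(t) f(-t)` is `(-1)^p` times the expression
`f_p² + 2 ∑ (-1)^i f_(p+i) f_(p-i)`, and its odd coefficients vanish; so the relations of `Γ`
say exactly `c(t) c(-t) = 1`. The `ⁿc_p` are the coefficients of `c(t) E(t)`, hence their
relation expression is read off from `c(t) E(t) c(-t) E(-t) = E(t) E(-t) = ∏ (1 - x_i² t²)`,
whose coefficient of `t^(2p)` is `(-1)^p e_p(x_1², …, x_n²)`. -/

open Finset

theorem Finset.sum_range_two_mul_add_one {M : Type*} [AddCommMonoid M] (f : ℕ → M) (q : ℕ) :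
    ∑ k ∈ range (2 * q + 1), f k = f q + ∑ i ∈ Icc 1 q, (f (q + i) + f (q - i)) := by
  induction q generalizing f with
  | zero => simp
  | succ q ih =>
    have hshift : ∑ i ∈ Icc 1 q, (f (q + i + 1) + f (q - i + 1)) =
        ∑ i ∈ Icc 1 q, (f (q + 1 + i) + f (q + 1 - i)) :=
      sum_congr rfl fun i hi => by rw [Nat.sub_add_comm (mem_Icc.mp hi).2, add_right_comm]
    rw [show 2 * (q + 1) + 1 = 2 * q + 1 + 1 + 1 by ring, sum_range_succ, sum_range_succ',
      ih (fun k => f (k + 1)), hshift, sum_Icc_succ_top (by omega), Nat.sub_self,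
      show 2 * q + 1 + 1 = q + 1 + (q + 1) by ring]
    abel

theorem esymF_neg {R σ : Type*} [CommRing R] [DecidableEq σ] (s : Finset σ) (v : σ → R)
    (k : ℕ) :
    esymF s (fun i => -v i) k = (-1) ^ k * esymF s v k := by
  rw [esymF, esymF, mul_sum]
  exact sum_congr rfl fun t ht => by rw [prod_neg, (mem_powersetCard.mp ht).2]

def gammaRel {R : Type*} [CommRing R] (a : ℕ → R) (p : ℕ) : R :=
  a p ^ 2 + 2 * ∑ i ∈ Icc 1 p, (-1) ^ i * a (p + i) * a (p - i)

theorem map_gammaRel {R S : Type*} [CommRing R] [CommRing S] (φ : R →+* S) (a : ℕ → R)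
    (p : ℕ) :
    φ (gammaRel a p) = gammaRel (fun k => φ (a k)) p := by
  simp [gammaRel, map_ofNat]

namespace PowerSeries

variable {R : Type*} [CommRing R]

theorem coeff_two_mul_mul_rescale_neg_one_self (f : R⟦X⟧) (p : ℕ) :
    coeff (2 * p) (f * rescale (-1) f) = (-1) ^ p * gammaRel (fun k => coeff k f) p := by
  rw [coeff_mul, Nat.sum_antidiagonal_eq_sum_range_succ_mk, sum_range_two_mul_add_one,
    gammaRel, mul_add, mul_sum, mul_sum]
  simp only [coeff_rescale]
  congr 1
  · rw [show 2 * p - p = p by omega]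
    ring
  · refine sum_congr rfl fun i hi => ?_
    have hip := (mem_Icc.mp hi).2
    have hsign : (-1 : R) ^ (p + i) = (-1) ^ (p - i) := by
      rw [show p + i = p - i + 2 * i by omega, pow_add, pow_mul, neg_one_sq, one_pow, mul_one]
    rw [show 2 * p - (p + i) = p - i by omega, show 2 * p - (p - i) = p + i by omega,
      ← hsign, pow_add]
    ring

theorem coeff_mul_rescale_neg_one_self_of_odd (f : R⟦X⟧) {m : ℕ} (hm : Odd m) :
    coeff m (f * rescale (-1) f) = 0 := by
  rw [coeff_mul]
  -- Pair `(u, v)` with `(v, u)`: the cheaper `S = -S` argument fails in characteristic 2.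
  refine sum_involution (fun uv _ => uv.swap) (fun uv huv => ?_) (fun uv huv _ => ?_)
    (fun uv huv => by simpa [add_comm] using huv) (fun uv _ => uv.swap_swap)
  · have hsum : uv.1 + uv.2 = m := mem_antidiagonal.mp huv
    have hsign : (-1 : R) ^ uv.1 = -(-1) ^ uv.2 := by
      have hprod : (-1 : R) ^ uv.1 * (-1) ^ uv.2 = -1 := by rw [← pow_add, hsum, hm.neg_one_pow]
      have hsq : (-1 : R) ^ (uv.2 + uv.2) = 1 := Even.neg_one_pow ⟨uv.2, rfl⟩
      linear_combination (-1 : R) ^ uv.2 * hprod - (-1 : R) ^ uv.1 * hsq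
    simp only [coeff_rescale, Prod.fst_swap, Prod.snd_swap, hsign]
    ring
  · have hsum : uv.1 + uv.2 = m := mem_antidiagonal.mp huv
    intro hswap
    have : uv.2 = uv.1 := congrArg Prod.fst hswap
    exact Nat.not_even_iff_odd.mpr hm ⟨uv.1, by omega⟩

theorem mul_rescale_neg_one_self_eq_one (f : R⟦X⟧) (h0 : constantCoeff f = 1)
    (h : ∀ p, 1 ≤ p → gammaRel (fun k => coeff k f) p = 0) : f * rescale (-1) f = 1 := by
  ext m
  rw [coeff_one]
  obtain ⟨p, rfl | rfl⟩ := Nat.even_or_odd' m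
  · rw [coeff_two_mul_mul_rescale_neg_one_self]
    rcases Nat.eq_zero_or_pos p with rfl | hp
    · simp [gammaRel, h0]
    · rw [h p hp, mul_zero, if_neg (by omega)]
  · rw [coeff_mul_rescale_neg_one_self_of_odd _ (odd_two_mul_add_one p), if_neg (by omega)]

variable {σ : Type*}

theorem coeff_prod_one_add_C_mul_X [DecidableEq σ] (s : Finset σ) (v : σ → R) (k : ℕ) :
    coeff k (∏ i ∈ s, (1 + C (v i) * X)) = esymF s v k := by
  simp only [prod_one_add, prod_mul_distrib, prod_const, ← map_prod, map_sum, coeff_C_mul_X_pow]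
  rw [esymF, powersetCard_eq_filter, sum_filter]
  simp only [eq_comm]

theorem rescale_one_add_C_mul_X (a b : R) : rescale a (1 + C b * X) = 1 + C (a * b) * X := by
  have hC : rescale a (C b) = C b := by
    ext n
    rcases n with _ | n <;> simp [coeff_C]
  rw [map_add, map_one, map_mul, hC, rescale_X, map_mul]
  ring

theorem prod_one_add_C_mul_X_mul_rescale_neg_one (s : Finset σ) (v : σ → R) :
    (∏ i ∈ s, (1 + C (v i) * X)) * rescale (-1) (∏ i ∈ s, (1 + C (v i) * X)) =
      expand 2 two_ne_zero (∏ i ∈ s, (1 + C (-v i ^ 2) * X)) := by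
  rw [map_prod, map_prod, ← prod_mul_distrib]
  refine prod_congr rfl fun i _ => ?_
  rw [rescale_one_add_C_mul_X]
  simp only [map_add, map_one, map_mul, map_neg, map_pow, expand_C, expand_X]
  ring

theorem coeff_two_mul_prod_one_add_C_mul_X_mul_rescale_neg_one [DecidableEq σ] (s : Finset σ)
    (v : σ → R) (p : ℕ) :
    coeff (2 * p)
        ((∏ i ∈ s, (1 + C (v i) * X)) * rescale (-1) (∏ i ∈ s, (1 + C (v i) * X))) =
      (-1) ^ p * esymF s (fun i => v i ^ 2) p := by
  rw [prod_one_add_C_mul_X_mul_rescale_neg_one, coeff_expand_mul, coeff_prod_one_add_C_mul_X,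
    esymF_neg]

end PowerSeries

theorem gammaRel_sum_mul_esymF {R σ : Type*} [CommRing R] [DecidableEq σ] {c : ℕ → R}
    (hc₀ : c 0 = 1) (hc : ∀ p, 1 ≤ p → gammaRel c p = 0) (s : Finset σ) (x : σ → R)
    (p : ℕ) :
    gammaRel (fun q => ∑ j ∈ range (q + 1), c (q - j) * esymF s x j) p =
      esymF s (fun i => x i ^ 2) p := by
  set E : PowerSeries R := ∏ i ∈ s, (1 + PowerSeries.C (x i) * PowerSeries.X)
  set F := PowerSeries.mk c * E
  have hE (k : ℕ) : PowerSeries.coeff k E = esymF s x k :=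
    PowerSeries.coeff_prod_one_add_C_mul_X s x k
  have hcoeff : (fun q => ∑ j ∈ range (q + 1), c (q - j) * esymF s x j) =
      fun q => PowerSeries.coeff q F := by
    ext q
    rw [show F = E * PowerSeries.mk c from mul_comm _ _, PowerSeries.coeff_mul,
      Nat.sum_antidiagonal_eq_sum_range_succ
        (fun i j => PowerSeries.coeff i E * PowerSeries.coeff j (PowerSeries.mk c))]
    refine sum_congr rfl fun j _ => ?_
    rw [PowerSeries.coeff_mk, mul_comm, hE]
  have hc_mul : PowerSeries.mk c * PowerSeries.rescale (-1) (PowerSeries.mk c) = 1 :=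
    PowerSeries.mul_rescale_neg_one_self_eq_one _ (by simpa using hc₀) (by simpa using hc)
  have hF : F * PowerSeries.rescale (-1) F = E * PowerSeries.rescale (-1) E := by
    rw [map_mul, mul_mul_mul_comm, hc_mul, one_mul]
  have h := PowerSeries.coeff_two_mul_mul_rescale_neg_one_self F p
  rw [hF, PowerSeries.coeff_two_mul_prod_one_add_C_mul_X_mul_rescale_neg_one, ← hcoeff] at h
  exact ((isUnit_neg_one.pow p).mul_left_cancel h).symm

theorem cQ_zero : cQ 0 = 1 := by
  rw [cQ, show cFree 0 = 1 by simp [cFree], map_one]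

theorem gammaRel_cQ {p : ℕ} (hp : 1 ≤ p) : gammaRel (fun k : ℕ => cQ k) p = 0 := by
  have hrel : Ideal.Quotient.mk IGam (relC p) = 0 :=
    Ideal.Quotient.eq_zero_iff_mem.mpr (Ideal.subset_span ⟨p, hp, rfl⟩)
  rw [← hrel, relC, gammaRel]
  simp only [map_add, map_pow, map_mul, map_sum, map_ofNat, map_neg, map_one]
  congr 2
  refine sum_congr rfl fun i hi => ?_
  rw [Nat.cast_add, Nat.cast_sub (mem_Icc.mp hi).2]
  rfl

theorem nc_eq_sum (n q : ℕ) :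
    nc n q = ∑ j ∈ range (q + 1), C (cQ ↑(q - j)) * esymF univ X j :=
  sum_congr rfl fun j hj => by rw [Nat.cast_sub (Nat.lt_succ_iff.mp (mem_range.mp hj))]

/-- `(ⁿc_p)² + 2 ∑_{i=1}^p (-1)^i (ⁿc_{p+i})(ⁿc_{p-i}) = e_p(x_1²,…,x_n²)`. -/
theorem nc_rel (n p : ℕ) :
    nc n p ^ 2 +
        2 * ∑ i ∈ Finset.Icc 1 p,
          (-1 : MvPolynomial (Fin n) GammaR) ^ i * nc n (p + i) * nc n (p - i) =
      esymF Finset.univ (fun i : Fin n => (X i : MvPolynomial (Fin n) GammaR) ^ 2) p := by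
  have hc : ∀ q, 1 ≤ q →
      gammaRel (fun k : ℕ => (C (cQ k) : MvPolynomial (Fin n) GammaR)) q = 0 :=
    fun q hq => by rw [← map_gammaRel, gammaRel_cQ hq, map_zero]
  have h := gammaRel_sum_mul_esymF (by rw [Nat.cast_zero, cQ_zero, map_one]) hc univ X p
  rwa [← funext (nc_eq_sum n)] at h
end
end

section
/- For $k \geq 0$ and $r \geq 1$, the identity ${}^k c^{-r}_p = {}^{k+1} c^{-r+1}_p - (x_{k+1} + y_r) \cdot {}^k c^{-r+1}_{p-1}$ holds in $\Gamma[X,Y]$. -/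
noncomputable section
open MvPolynomial

/-- The ring `Γ[X, Y]` in infinitely many variables `x_1, x_2, …` and
`y_1, y_2, …` (the index `0` variables are unused). -/
abbrev SR := MvPolynomial (ℕ ⊕ ℕ) GammaR

/-- The variable `x_k`. -/
def xx (k : ℕ) : SR := X (Sum.inl k)

/-- The variable `y_k`. -/
def yy (k : ℕ) : SR := X (Sum.inr k)

/-- `h^r_j` evaluated at a family `v`: the complete homogeneous symmetric
polynomial `h_j` in `v_1, …, v_r` for `r ≥ 0`, and the elementary symmetric
polynomial `e_j` in `v_1, …, v_{-r}` for `r < 0` (so `h^0_j = δ_{0j}`). -/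
def hkv (v : ℕ → SR) (r : ℤ) (j : ℕ) : SR :=
  if 0 ≤ r then hsymF (Finset.Icc 1 r.toNat) v j
  else esymF (Finset.Icc 1 (-r).toNat) v j

/-- `ᵏc^{k'}_p = ∑_{i,j ≥ 0} c_{p-i-j} h^{-k}_i(X) h^{k'}_j(-Y)`. -/
def kc (k k' p : ℤ) : SR :=
  ∑ i ∈ Finset.range (p.toNat + 1), ∑ j ∈ Finset.range (p.toNat + 1),
    C (cQ (p - i - j)) * hkv xx (-k) i * hkv (fun t => -(yy t)) k' j

/-!
With `c(t) = ∑ c_n tⁿ`, `ᵏc^{-r}_p` is the coefficient of `tᵖ` in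
`c(t) ∏_{i ≤ k} (1 + x_i t) ∏_{j ≤ r} (1 - y_j t)`. Adjoining the factor `1 + x_{k+1} t`, resp.
`1 - y_r t`, gives the one-step recursions `ᵏ⁺¹c^{k'}_p = ᵏc^{k'}_p + x_{k+1} ᵏc^{k'}_{p-1}` and
`ᵏc^{-r}_p = ᵏc^{-r+1}_p - y_r ᵏc^{-r+1}_{p-1}`, which combine to the identity. Both come from
the Pascal-type rule `e_{j+1}(v, a) = e_{j+1}(v) + a e_j(v)`, applied inside a double sum
`∑ c_{p-i-j} a_i b_j` that may be truncated at any bound exceeding `p`.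
-/

open Finset

theorem Multiset.esymm_cons_succ {R : Type*} [CommSemiring R] (a : R) (s : Multiset R) (n : ℕ) :
    (a ::ₘ s).esymm (n + 1) = s.esymm (n + 1) + a * s.esymm n := by
  simp only [Multiset.esymm, Multiset.powersetCard_cons, Multiset.map_add, Multiset.sum_add,
    Multiset.map_map, Function.comp_def, Multiset.prod_cons, Multiset.sum_map_mul_left]

section Symmetric

variable {R : Type*} [CommRing R] {σ : Type*} [DecidableEq σ]

theorem esymF_eq_esymm (s : Finset σ) (v : σ → R) (n : ℕ) :
    esymF s v n = (s.val.map v).esymm n :=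
  (Finset.esymm_map_val v s n).symm

theorem esymF_zero (s : Finset σ) (v : σ → R) : esymF s v 0 = 1 := by
  simp [esymF]

theorem esymF_insert_succ {s : Finset σ} {a : σ} (ha : a ∉ s) (v : σ → R) (n : ℕ) :
    esymF (insert a s) v (n + 1) = esymF s v (n + 1) + v a * esymF s v n := by
  simp only [esymF_eq_esymm, Finset.insert_val_of_notMem ha, Multiset.map_cons,
    Multiset.esymm_cons_succ]

theorem hsymF_zero (s : Finset σ) (v : σ → R) : hsymF s v 0 = 1 := by
  simp only [hsymF, Finset.sym_zero, sum_singleton]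
  rfl

theorem hsymF_empty (v : σ → R) (n : ℕ) : hsymF ∅ v n = esymF ∅ v n := by
  cases n with
  | zero => rw [hsymF_zero, esymF_zero]
  | succ n => simp [hsymF, esymF, powersetCard_eq_empty.2 (by simp : #(∅ : Finset σ) < n + 1)]

end Symmetric

theorem hkv_neg_natCast (v : ℕ → SR) (r j : ℕ) : hkv v (-r) j = esymF (Icc 1 r) v j := by
  cases r with
  | zero => simpa [hkv] using hsymF_empty v j
  | succ r => rw [hkv, if_neg (by omega)]; simp

theorem hkv_zero (v : ℕ → SR) (r : ℤ) : hkv v r 0 = 1 := by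
  unfold hkv
  split_ifs
  · exact hsymF_zero _ v
  · exact esymF_zero _ v

theorem hkv_neg_natCast_succ (v : ℕ → SR) (r j : ℕ) :
    hkv v (-((r : ℤ) + 1)) (j + 1) = hkv v (-r) (j + 1) + v (r + 1) * hkv v (-r) j := by
  rw [← Nat.cast_add_one, hkv_neg_natCast, hkv_neg_natCast, hkv_neg_natCast,
    ← insert_Icc_right_eq_Icc_add_one (by omega), esymF_insert_succ (by simp)]

section Convolution

variable {R : Type*} [CommRing R] {c : ℤ → R}

def convSum (c : ℤ → R) (M : ℕ) (p : ℤ) (a b : ℕ → R) : R :=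
  ∑ i ∈ range M, ∑ j ∈ range M, c (p - i - j) * a i * b j

theorem convSum_comm (M : ℕ) (p : ℤ) (a b : ℕ → R) :
    convSum c M p a b = convSum c M p b a := by
  rw [convSum, convSum, sum_comm]
  refine sum_congr rfl fun j _ => sum_congr rfl fun i _ => ?_
  rw [sub_right_comm, mul_right_comm]

theorem convSum_eq_of_le (hc : ∀ n < 0, c n = 0) {M N : ℕ} {p : ℤ} (hM : p < M) (hMN : M ≤ N)
    (a b : ℕ → R) : convSum c M p a b = convSum c N p a b := by
  have hvanish : ∀ i j : ℕ, M ≤ i ∨ M ≤ j → c (p - i - j) * a i * b j = 0 := fun i j hij => by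
    rw [hc _ (by omega), zero_mul, zero_mul]
  have hsub : range M ⊆ range N := range_subset_range.2 hMN
  rw [convSum, convSum]
  refine sum_subset_zero_on_sdiff hsub (fun i hi => ?_) (fun i _ => ?_)
  · simp only [mem_sdiff, mem_range, not_lt] at hi
    exact sum_eq_zero fun j _ => hvanish i j (Or.inl hi.2)
  · refine sum_subset hsub fun j _ hj => hvanish i j (Or.inr ?_)
    simpa using hj

theorem sum_range_mul_of_shift (hc : ∀ n < 0, c n = 0) {a a' : ℕ → R} {x : R}
    (h₀ : a' 0 = a 0) (hsucc : ∀ i, a' (i + 1) = a (i + 1) + x * a i) {M : ℕ} {p : ℤ}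
    (hM : p < M) :
    ∑ i ∈ range M, c (p - i) * a' i =
      ∑ i ∈ range M, c (p - i) * a i + x * ∑ i ∈ range M, c (p - 1 - i) * a i := by
  cases M with
  | zero => simp
  | succ m =>
    have hlast : c (p - 1 - m) = 0 := hc _ (by omega)
    rw [sum_range_succ' _ m, sum_range_succ' (fun i => c (p - i) * a i) m,
      sum_range_succ (fun i => c (p - 1 - i) * a i) m, hlast, zero_mul, add_zero, mul_sum]
    simp only [hsucc, h₀, mul_add, sum_add_distrib, Nat.cast_add, Nat.cast_one]
    have hidx : ∀ i : ℕ, p - (i + 1) = p - 1 - i := fun i => by ring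
    simp only [hidx, Nat.cast_zero, sub_zero, mul_left_comm (c _) x]
    ring

theorem convSum_of_shift (hc : ∀ n < 0, c n = 0) {a a' : ℕ → R} {x : R}
    (h₀ : a' 0 = a 0) (hsucc : ∀ i, a' (i + 1) = a (i + 1) + x * a i) {M : ℕ} {p : ℤ}
    (hM : p < M) (b : ℕ → R) :
    convSum c M p a' b = convSum c M p a b + x * convSum c M (p - 1) a b := by
  have hrow : ∀ j : ℕ, ∑ i ∈ range M, c (p - i - j) * a' i * b j =
      ∑ i ∈ range M, c (p - i - j) * a i * b j +
        x * ∑ i ∈ range M, c (p - 1 - i - j) * a i * b j := fun j => by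
    have h := congrArg (· * b j)
      (sum_range_mul_of_shift hc h₀ hsucc (M := M) (p := p - j) (by omega))
    simp only [add_mul, sum_mul, mul_assoc] at h ⊢
    simpa only [sub_right_comm _ (j : ℤ)] using h
  rw [convSum, convSum, convSum, sum_comm, sum_congr rfl fun j _ => hrow j, sum_add_distrib,
    ← mul_sum, sum_comm, sum_comm (f := fun (i j : ℕ) => c (p - 1 - i - j) * a i * b j)]

end Convolution

theorem C_cQ_of_neg : ∀ n < 0, (C (cQ n) : SR) = 0 := fun n hn => by
  rw [cQ, cFree, if_pos hn.le, if_neg hn.ne, map_zero, map_zero]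

theorem kc_eq_convSum (k k' p : ℤ) {M : ℕ} (hM : p.toNat < M) :
    kc k k' p = convSum (fun n => C (cQ n)) M p (hkv xx (-k)) (hkv (fun t => -(yy t)) k') := by
  rw [← convSum_eq_of_le C_cQ_of_neg (M := p.toNat + 1) (p := p) (by omega) hM, convSum, kc]

theorem kc_succ_left (k : ℕ) (k' p : ℤ) :
    kc ((k : ℤ) + 1) k' p = kc k k' p + xx (k + 1) * kc k k' (p - 1) := by
  have hM : p < ((p.toNat + 1 : ℕ) : ℤ) := by omega
  rw [kc_eq_convSum _ _ p (lt_add_one _), kc_eq_convSum _ _ p (lt_add_one _),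
    kc_eq_convSum _ _ (p - 1) (M := p.toNat + 1) (by omega)]
  exact convSum_of_shift C_cQ_of_neg (by rw [hkv_zero, hkv_zero]) (hkv_neg_natCast_succ xx k) hM _

theorem kc_neg_succ_right (k : ℤ) (r : ℕ) (p : ℤ) :
    kc k (-((r : ℤ) + 1)) p = kc k (-r) p - yy (r + 1) * kc k (-r) (p - 1) := by
  have hM : p < ((p.toNat + 1 : ℕ) : ℤ) := by omega
  rw [kc_eq_convSum _ _ p (lt_add_one _), kc_eq_convSum _ _ p (lt_add_one _),
    kc_eq_convSum _ _ (p - 1) (M := p.toNat + 1) (by omega),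
    convSum_comm, convSum_comm (a := hkv xx (-k)), convSum_comm (a := hkv xx (-k)),
    convSum_of_shift C_cQ_of_neg (by rw [hkv_zero, hkv_zero]) (hkv_neg_natCast_succ _ r) hM]
  ring

/-- For `k ≥ 0` and `r ≥ 1`:
`ᵏc^{-r}_p = ᵏ⁺¹c^{-r+1}_p - (x_{k+1} + y_r) ᵏc^{-r+1}_{p-1}` in `Γ[X,Y]`. -/
theorem kc_recursion (k r : ℕ) (hr : 1 ≤ r) (p : ℤ) :
    kc (k : ℤ) (-(r : ℤ)) p =
      kc ((k : ℤ) + 1) (-(r : ℤ) + 1) p -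
        (xx (k + 1) + yy r) * kc (k : ℤ) (-(r : ℤ) + 1) (p - 1) := by
  obtain ⟨s, rfl⟩ : ∃ s, r = s + 1 := ⟨r - 1, by omega⟩
  have hr' : -((s + 1 : ℕ) : ℤ) + 1 = -s := by push_cast; ring
  rw [hr', kc_succ_left, Nat.cast_add_one, kc_neg_succ_right]
  ring
end
end

section
/- The involution $\omega$ of $\Gamma[X,Y]$ determined by $\omega(x_j) = -y_j$, $\omega(y_j) = -x_j$, $\omega(c_p) = c_p$ satisfies $\omega({}^k c^r_p) = {}^{-r} c^{-k}_p$ for all $k, r, p \in \mathbb{Z}$. -/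
noncomputable section
open MvPolynomial

/-- The involution `ω` of `Γ[X,Y]` with `ω(x_j) = -y_j`, `ω(y_j) = -x_j`, and
`ω(c_p) = c_p` (it is `Γ`-linear since it fixes every `c_p`). -/
def omg : SR →ₐ[GammaR] SR :=
  MvPolynomial.aeval (Sum.elim (fun j : ℕ => -(yy j)) (fun j : ℕ => -(xx j)))

section SymmetricFunctions

variable {R S σ F : Type*} [CommRing R] [CommRing S] [DecidableEq σ]
  [FunLike F R S] [RingHomClass F R S] (f : F) (s : Finset σ) (v : σ → R) (j : ℕ)

theorem map_hsymF : f (hsymF s v j) = hsymF s (f ∘ v) j := by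
  simp only [hsymF, map_sum, map_multiset_prod, Multiset.map_map]

theorem map_esymF : f (esymF s v j) = esymF s (f ∘ v) j := by
  simp only [esymF, map_sum, map_prod, Function.comp_apply]

end SymmetricFunctions

theorem map_hkv {F : Type*} [FunLike F SR SR] [RingHomClass F SR SR] (f : F) (v : ℕ → SR)
    (r : ℤ) (j : ℕ) : f (hkv v r j) = hkv (f ∘ v) r j := by
  unfold hkv
  split_ifs
  exacts [map_hsymF f _ v j, map_esymF f _ v j]

theorem omg_C (a : GammaR) : omg (C a) = C a :=
  omg.commutes a

theorem omg_comp_xx : omg ∘ xx = fun t => -yy t := by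
  funext t
  simp [omg, xx, yy]

theorem omg_comp_neg_yy : (omg ∘ fun t => -yy t) = xx := by
  funext t
  simp only [Function.comp_apply, map_neg, omg, yy, aeval_X, Sum.elim_inr]
  exact neg_neg (xx t)

/-- `ω(ᵏc^r_p) = ⁻ʳc^{-k}_p` for all `k, r, p ∈ ℤ`. -/
theorem omega_kc (k r p : ℤ) : omg (kc k r p) = kc (-r) (-k) p := by
  simp only [kc, map_sum, map_mul, omg_C, map_hkv, omg_comp_xx, omg_comp_neg_yy]
  rw [Finset.sum_comm]
  refine Finset.sum_congr rfl fun i _ => Finset.sum_congr rfl fun j _ => ?_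
  rw [neg_neg, sub_right_comm, mul_right_comm]
end
end

section
/- In the ring $\Gamma' = \mathbb{Z}[b_1, b_2, \ldots]/J$ where $J$ is generated by the relations $b_p^2 + 2\sum_{i=1}^{p-1}(-1)^i b_{p+i} b_{p-i} + (-1)^p b_{2p} = 0$ for all $p \geq 1$ (with $b_0 = 1$), the map $\Gamma \to \Gamma'$ sending $c_p \mapsto 2 b_p$ (for $p \geq 1$) is a well-defined injective ring homomorphism. -/
noncomputable section
open MvPolynomial

/-- The element `b_p` of the free polynomial ring `ℤ[b_1, b_2, …]`, with
`b_0 = 1` and `b_p = 0` for `p < 0`. -/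
def bFree : ℤ → MvPolynomial ℕ ℤ := fun p =>
  if p ≤ 0 then (if p = 0 then 1 else 0) else MvPolynomial.X (p.toNat - 1)

/-- The relation `b_p² + 2 ∑_{i=1}^{p-1} (-1)^i b_{p+i} b_{p-i} + (-1)^p b_{2p}`. -/
def relB (p : ℕ) : MvPolynomial ℕ ℤ :=
  bFree (p : ℤ) ^ 2 +
    2 * ∑ i ∈ Finset.Icc 1 (p - 1),
      (-1 : MvPolynomial ℕ ℤ) ^ i * bFree ((p : ℤ) + i) * bFree ((p : ℤ) - i) +
    (-1 : MvPolynomial ℕ ℤ) ^ p * bFree (2 * (p : ℤ))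

/-- The ideal generated by the relations `relB p` for `p ≥ 1`. -/
def IGamP : Ideal (MvPolynomial ℕ ℤ) := Ideal.span {f | ∃ p : ℕ, 1 ≤ p ∧ f = relB p}

/-- The ring `Γ' = ℤ[b]/⟨b_p² + 2∑_{i=1}^{p-1}(-1)^i b_{p+i}b_{p-i} + (-1)^p b_{2p}⟩`. -/
abbrev GammaPR := MvPolynomial ℕ ℤ ⧸ IGamP

/-- The class of `b_p` in `Γ'`. -/
def bQ : ℤ → GammaPR := fun p => Ideal.Quotient.mk IGamP (bFree p)

/-!
Send `Γ'` to `ℚ[x₀, x₁, …]` by `b_{2k+1} ↦ x_k`, the images of the `b_{2n}` being then forced by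
the defining relations. The composite `Γ → Γ' → ℚ[x]` sends `c_p` to twice the image `β_p` of
`b_p`. The relations of `Γ` rewrite a square `c_p²` in terms of monomials with a larger sum of
squared parts, so `Γ` is spanned over `ℤ` by the monomials `c_λ` with `λ` strict. Their images
are homogeneous for the weight `deg x_k = 2k + 1`; in weight `N` they span all monomials in the
`x_k` of weight `N`, which correspond to the partitions of `N` into odd parts, and by Euler's
theorem there are as many of those as strict partitions of `N`. Hence the images are linearly
independent, and the composite is injective.
-/

namespace MvPolynomial

variable {R σ M ι : Type*} [CommRing R] [AddCommMonoid M] {w : σ → M}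

theorem IsWeightedHomogeneous.multiset_prod (s : Multiset ι) (φ : ι → MvPolynomial σ R)
    (n : ι → M) (h : ∀ i ∈ s, IsWeightedHomogeneous w (φ i) (n i)) :
    IsWeightedHomogeneous w (s.map φ).prod (s.map n).sum := by
  induction s using Multiset.induction_on with
  | empty => simpa using isWeightedHomogeneous_one R w
  | cons a s ih =>
    simp only [Multiset.map_cons, Multiset.prod_cons, Multiset.sum_cons]
    exact (h a (Multiset.mem_cons_self a s)).mul (ih fun i hi => h i (Multiset.mem_cons_of_mem hi))

theorem prod_map_X [DecidableEq σ] (s : Multiset σ) :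
    (s.map X).prod = monomial (Multiset.toFinsupp s) (1 : R) := by
  classical
  induction s using Multiset.induction_on with
  | empty => simp
  | cons a s ih =>
    rw [Multiset.map_cons, Multiset.prod_cons, ih, X, monomial_mul, one_mul, ← Multiset.singleton_add,
      Multiset.toFinsupp_add, Multiset.toFinsupp_singleton]

theorem weightedHomogeneousComponent_mem_span [DecidableEq M] {v : ι → MvPolynomial σ R}
    {deg : ι → M} (hv : ∀ i, IsWeightedHomogeneous w (v i) (deg i)) {p : MvPolynomial σ R}
    (hp : p ∈ Submodule.span R (Set.range v)) (m : M) :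
    weightedHomogeneousComponent w m p ∈
      Submodule.span R (Set.range fun i : {i // deg i = m} => v i) := by
  induction hp using Submodule.span_induction with
  | mem _ hq =>
    obtain ⟨i, rfl⟩ := hq
    by_cases hi : deg i = m
    · have hvi : IsWeightedHomogeneous w (v i) m := hi ▸ hv i
      rw [hvi.weightedHomogeneousComponent_same]
      exact Submodule.subset_span ⟨⟨i, hi⟩, rfl⟩
    · rw [(hv i).weightedHomogeneousComponent_ne m (Ne.symm hi)]
      exact Submodule.zero_mem _
  | zero => simp
  | add _ _ _ _ hp hq => simpa using Submodule.add_mem _ hp hq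
  | smul a _ _ hp => simpa using Submodule.smul_mem _ a hp

theorem LinearIndependent.of_isWeightedHomogeneous {v : ι → MvPolynomial σ R} {deg : ι → M}
    (hv : ∀ i, IsWeightedHomogeneous w (v i) (deg i))
    (h : ∀ m, LinearIndependent R fun i : {i // deg i = m} => v i) : LinearIndependent R v := by
  classical
  have hind : iSupIndep (weightedHomogeneousSubmodule R w) :=
    (weightedDecomposition R w).isInternal.submodule_iSupIndep
  have hle : ∀ m, Submodule.span R (Set.range fun i : {i // deg i = m} => v i) ≤
      weightedHomogeneousSubmodule R w m :=
    fun m => Submodule.span_le.2 <| Set.range_subset_iff.2 fun ⟨i, hi⟩ =>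
      (mem_weightedHomogeneousSubmodule R w m _).2 (hi ▸ hv i)
  have hsigma := linearIndependent_iUnion_finite h fun m t _ hmt =>
    (hind m).mono (hle m) <| iSup₂_le fun j hj =>
      (hle j).trans <| le_iSup₂_of_le j (ne_of_mem_of_not_mem hj hmt) le_rfl
  exact (linearIndependent_equiv (Equiv.sigmaFiberEquiv deg)).1 hsigma

end MvPolynomial

namespace SchurQ

section Relations

variable {A : Type*} [CommRing A]

/-- The part common to the relations of index `n + 1` of `Γ` and of `Γ'`, with `t k` in the role
of `c_{k+1}`, resp. `b_{k+1}`. -/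
def relSum (t : ℕ → A) (n : ℕ) : A :=
  t n ^ 2 + 2 * ∑ i ∈ Finset.Icc 1 n, (-1) ^ i * t (n + i) * t (n - i)

theorem map_relSum {B : Type*} [CommRing B] (ψ : A →+* B) (t : ℕ → A) (n : ℕ) :
    ψ (relSum t n) = relSum (fun k => ψ (t k)) n := by
  simp [relSum, map_ofNat]

theorem relSum_const_mul (c : A) (t : ℕ → A) (n : ℕ) :
    relSum (fun k => c * t k) n = c ^ 2 * relSum t n := by
  simp only [relSum, mul_add, Finset.mul_sum]
  congr 1
  · ring
  · exact Finset.sum_congr rfl fun i _ => by ring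

theorem bFree_eq_cFree : bFree = cFree := rfl

theorem cFree_of_eq {z : ℤ} {k : ℕ} (h : z = k + 1) : cFree z = X k := by
  subst h
  simp [cFree]

theorem sum_cFree_mul_cFree (n : ℕ) :
    ∑ i ∈ Finset.Icc 1 n, (-1) ^ i * cFree (((n + 1 : ℕ) : ℤ) + i) * cFree (((n + 1 : ℕ) : ℤ) - i) =
      ∑ i ∈ Finset.Icc 1 n, (-1) ^ i * X (n + i) * X (n - i) := by
  refine Finset.sum_congr rfl fun i hi => ?_
  rw [Finset.mem_Icc] at hi
  rw [cFree_of_eq (k := n + i) (by push_cast; ring), cFree_of_eq (k := n - i) (by omega)]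

theorem relC_succ (n : ℕ) :
    relC (n + 1) = relSum X n + 2 * ((-1) ^ (n + 1) * X (2 * n + 1)) := by
  rw [relC, Finset.sum_Icc_succ_top (by omega), sum_cFree_mul_cFree,
    cFree_of_eq (k := n) (by push_cast; ring), cFree_of_eq (k := 2 * n + 1) (by push_cast; ring),
    sub_self, show cFree 0 = 1 by simp [cFree]]
  simp only [relSum]
  ring

theorem relB_succ (n : ℕ) :
    relB (n + 1) = relSum X n + (-1) ^ (n + 1) * X (2 * n + 1) := by
  rw [relB, bFree_eq_cFree, Nat.add_sub_cancel, sum_cFree_mul_cFree,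
    cFree_of_eq (k := n) (by push_cast; ring), cFree_of_eq (k := 2 * n + 1) (by push_cast; ring)]
  rfl

end Relations

section Beta

variable (R : Type*) [CommRing R]

/-- The image of `b_{k+1}`: `b_{2k+1} ↦ X k`, and `b_{2n+2}` is solved from the relation of
index `n + 1`. -/
def beta (k : ℕ) : MvPolynomial ℕ R :=
  if k % 2 = 0 then X (k / 2)
  else (-1) ^ (k / 2) * (beta (k / 2) ^ 2 + 2 * ∑ i ∈ (Finset.Icc 1 (k / 2)).attach,
    (-1) ^ (i : ℕ) * beta (k / 2 + i) * beta (k / 2 - i))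
termination_by k
decreasing_by
  all_goals first
    | omega
    | have := Finset.mem_Icc.1 i.2; omega

theorem beta_even (k : ℕ) : beta R (2 * k) = X k := by
  rw [beta, if_pos (by omega), Nat.mul_div_cancel_left k two_pos]

theorem beta_odd (n : ℕ) : beta R (2 * n + 1) = (-1) ^ n * relSum (beta R) n := by
  rw [beta.eq_1 R (2 * n + 1), if_neg (by omega), show (2 * n + 1) / 2 = n by omega,
    Finset.sum_attach (Finset.Icc 1 n) fun i => (-1) ^ i * beta R (n + i) * beta R (n - i)]
  rfl

theorem relSum_beta (n : ℕ) : relSum (beta R) n + (-1) ^ (n + 1) * beta R (2 * n + 1) = 0 := by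
  rw [beta_odd, ← mul_assoc, ← pow_add, show n + 1 + n = 2 * n + 1 by ring, pow_succ, pow_mul,
    neg_one_sq, one_pow]
  ring

def oddWeight (k : ℕ) : ℕ := 2 * k + 1

variable {R}

theorem isWeightedHomogeneous_relSum {σ : Type*} {w : σ → ℕ} {t : ℕ → MvPolynomial σ R} {n : ℕ}
    (ht : ∀ k ≤ 2 * n, IsWeightedHomogeneous w (t k) (k + 1)) :
    IsWeightedHomogeneous w (relSum t n) (2 * n + 2) := by
  have hsq : IsWeightedHomogeneous w (t n ^ 2) (2 * n + 2) := by
    simpa [pow_two, two_mul, add_assoc, add_left_comm] using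
      (ht n (by omega)).mul (ht n (by omega))
  have hterm : ∀ i ∈ Finset.Icc 1 n,
      IsWeightedHomogeneous w ((-1) ^ i * t (n + i) * t (n - i)) (2 * n + 2) := by
    intro i hi
    rw [Finset.mem_Icc] at hi
    have hprod : IsWeightedHomogeneous w (t (n + i) * t (n - i)) (2 * n + 2) := by
      have := (ht (n + i) (by omega)).mul (ht (n - i) (by omega))
      rwa [show n + i + 1 + (n - i + 1) = 2 * n + 2 by omega] at this
    rw [mul_assoc]
    rcases neg_one_pow_eq_or (MvPolynomial σ R) i with h | h <;> rw [h]
    · simpa using hprod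
    · simpa using hprod.neg
  have hsum := IsWeightedHomogeneous.sum _ _ _ hterm
  exact hsq.add (by rw [two_mul]; exact hsum.add hsum)

theorem isWeightedHomogeneous_beta (k : ℕ) :
    IsWeightedHomogeneous oddWeight (beta R k) (k + 1) := by
  induction k using Nat.strong_induction_on with
  | _ k ih =>
  obtain ⟨n, rfl | rfl⟩ := Nat.even_or_odd' k
  · rw [beta_even]
    exact isWeightedHomogeneous_X R oddWeight n
  · have hsum := isWeightedHomogeneous_relSum (n := n) fun j hj => ih j (by omega)
    rw [beta_odd]
    rcases neg_one_pow_eq_or (MvPolynomial ℕ R) n with h | h <;> rw [h]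
    · simpa using hsum
    · simpa using hsum.neg

end Beta

-- `cGen k = c_{k+1}` and `bGen k = b_{k+1}`.
def cGen (k : ℕ) : GammaR := Ideal.Quotient.mk IGam (X k)

def bGen (k : ℕ) : GammaPR := Ideal.Quotient.mk IGamP (X k)

theorem relSum_cGen (n : ℕ) : relSum cGen n + 2 * ((-1) ^ (n + 1) * cGen (2 * n + 1)) = 0 := by
  have h : Ideal.Quotient.mk IGam (relC (n + 1)) = 0 :=
    Ideal.Quotient.eq_zero_iff_mem.2 (Ideal.subset_span ⟨n + 1, by omega, rfl⟩)
  rw [relC_succ, map_add, map_mul, map_mul, map_pow, map_neg, map_one, map_ofNat, map_relSum]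
    at h
  exact h

theorem relSum_bGen (n : ℕ) : relSum bGen n + (-1) ^ (n + 1) * bGen (2 * n + 1) = 0 := by
  have h : Ideal.Quotient.mk IGamP (relB (n + 1)) = 0 :=
    Ideal.Quotient.eq_zero_iff_mem.2 (Ideal.subset_span ⟨n + 1, by omega, rfl⟩)
  rw [relB_succ, map_add, map_mul, map_pow, map_neg, map_one, map_relSum] at h
  exact h

theorem IGam_le_ker {A : Type*} [CommRing A] {ψ : MvPolynomial ℕ ℤ →+* A}
    (h : ∀ n, ψ (relC (n + 1)) = 0) : IGam ≤ RingHom.ker ψ := by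
  refine Ideal.span_le.2 ?_
  rintro _ ⟨p, hp, rfl⟩
  obtain ⟨n, rfl⟩ := Nat.exists_eq_add_of_le' hp
  exact h n

theorem IGamP_le_ker {A : Type*} [CommRing A] {ψ : MvPolynomial ℕ ℤ →+* A}
    (h : ∀ n, ψ (relB (n + 1)) = 0) : IGamP ≤ RingHom.ker ψ := by
  refine Ideal.span_le.2 ?_
  rintro _ ⟨p, hp, rfl⟩
  obtain ⟨n, rfl⟩ := Nat.exists_eq_add_of_le' hp
  exact h n

theorem eval₂Hom_two_mul_bGen_relC (n : ℕ) :
    eval₂Hom (Int.castRingHom GammaPR) (fun k => 2 * bGen k) (relC (n + 1)) = 0 := by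
  simp only [relC_succ, map_add, map_mul, map_pow, map_neg, map_one, map_ofNat, map_relSum,
    eval₂Hom_X', relSum_const_mul]
  linear_combination 4 * relSum_bGen n

def toGammaP : GammaR →+* GammaPR :=
  Ideal.Quotient.lift IGam (eval₂Hom (Int.castRingHom GammaPR) fun k => 2 * bGen k)
    fun _ h => RingHom.mem_ker.1 (IGam_le_ker eval₂Hom_two_mul_bGen_relC h)

theorem eval₂Hom_beta_relB (n : ℕ) :
    eval₂Hom (Int.castRingHom (MvPolynomial ℕ ℚ)) (beta ℚ) (relB (n + 1)) = 0 := by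
  simp only [relB_succ, map_add, map_mul, map_pow, map_neg, map_one, map_relSum, eval₂Hom_X']
  exact relSum_beta ℚ n

def evalBeta : GammaPR →+* MvPolynomial ℕ ℚ :=
  Ideal.Quotient.lift IGamP (eval₂Hom (Int.castRingHom (MvPolynomial ℕ ℚ)) (beta ℚ))
    fun _ h => RingHom.mem_ker.1 (IGamP_le_ker eval₂Hom_beta_relB h)

theorem toGammaP_cGen (k : ℕ) : toGammaP (cGen k) = 2 * bGen k := by
  rw [toGammaP, cGen, Ideal.Quotient.lift_mk, eval₂Hom_X']

theorem toGammaP_cQ {p : ℤ} (hp : 1 ≤ p) : toGammaP (cQ p) = 2 * bQ p := by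
  have h : cFree p = X (p.toNat - 1) := cFree_of_eq (by omega)
  rw [cQ, bQ, bFree_eq_cFree, h]
  exact toGammaP_cGen _

def realize : GammaR →+* MvPolynomial ℕ ℚ := evalBeta.comp toGammaP

theorem realize_cGen (k : ℕ) : realize (cGen k) = 2 * beta ℚ k := by
  rw [realize, RingHom.comp_apply, toGammaP_cGen, map_mul, map_ofNat, evalBeta, bGen,
    Ideal.Quotient.lift_mk, eval₂Hom_X']

def cMon (m : Multiset ℕ) : GammaR := (m.map cGen).prod

theorem cMon_eq_mk (m : Multiset ℕ) :
    cMon m = Ideal.Quotient.mk IGam (monomial (Multiset.toFinsupp m) 1) := by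
  rw [← prod_map_X, map_multiset_prod, Multiset.map_map]
  rfl

theorem cMon_cons_cons (n : ℕ) (m : Multiset ℕ) :
    cMon (n ::ₘ n ::ₘ m) =
      ∑ i ∈ Finset.Icc 1 n, (-2 * (-1) ^ i : ℤ) • cMon ((n + i) ::ₘ (n - i) ::ₘ m) +
        (2 * (-1) ^ n : ℤ) • cMon ((2 * n + 1) ::ₘ m) := by
  simp only [cMon, Multiset.map_cons, Multiset.prod_cons, zsmul_eq_mul]
  push_cast
  have hsum : ∑ i ∈ Finset.Icc 1 n,
      -2 * (-1) ^ i * (cGen (n + i) * (cGen (n - i) * (m.map cGen).prod)) =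
      -2 * (∑ i ∈ Finset.Icc 1 n, (-1) ^ i * cGen (n + i) * cGen (n - i)) * (m.map cGen).prod := by
    rw [Finset.mul_sum, Finset.sum_mul]
    exact Finset.sum_congr rfl fun i _ => by ring
  have hrel := relSum_cGen n
  rw [relSum] at hrel
  rw [hsum]
  linear_combination (m.map cGen).prod * hrel

def partSum (m : Multiset ℕ) : ℕ := (m.map (· + 1)).sum

def partSqSum (m : Multiset ℕ) : ℕ := (m.map fun k => (k + 1) ^ 2).sum

theorem partSqSum_le (m : Multiset ℕ) : partSqSum m ≤ partSum m ^ 2 := by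
  induction m using Multiset.induction_on with
  | empty => simp [partSqSum, partSum]
  | cons a m ih =>
    simp only [partSqSum, partSum, Multiset.map_cons, Multiset.sum_cons] at ih ⊢
    nlinarith [Nat.zero_le ((a + 1) * (m.map (· + 1)).sum)]

theorem partSum_sq_sub_partSqSum_lt {m m' : Multiset ℕ} (hsum : partSum m' = partSum m)
    (hsq : partSqSum m < partSqSum m') :
    partSum m' ^ 2 - partSqSum m' < partSum m ^ 2 - partSqSum m := by
  have := partSqSum_le m'
  rw [hsum] at this ⊢
  omega

-- A repeated index is removed by `cMon_cons_cons`, which preserves `partSum` and strictly increases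
-- `partSqSum ≤ partSum ^ 2`.
theorem cMon_mem_span (m : Multiset ℕ) :
    cMon m ∈ Submodule.span ℤ (Set.range fun S : Finset ℕ => cMon S.val) := by
  induction hk : partSum m ^ 2 - partSqSum m using Nat.strong_induction_on generalizing m with
  | _ k ih =>
  by_cases hm : m.Nodup
  · exact Submodule.subset_span ⟨⟨m, hm⟩, rfl⟩
  obtain ⟨n, m, rfl⟩ : ∃ n m', m = n ::ₘ n ::ₘ m' := by
    simpa [Multiset.nodup_iff_ne_cons_cons] using hm
  rw [cMon_cons_cons]
  refine Submodule.add_mem _ (Submodule.sum_mem _ fun i hi => Submodule.smul_mem _ _ ?_)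
    (Submodule.smul_mem _ _ ?_) <;> refine ih _ (hk ▸ partSum_sq_sub_partSqSum_lt ?_ ?_) _ rfl
  all_goals simp only [partSum, partSqSum, Multiset.map_cons, Multiset.sum_cons]
  · have := Finset.mem_Icc.1 hi
    omega
  · obtain ⟨j, rfl⟩ := Nat.exists_eq_add_of_le (Finset.mem_Icc.1 hi).2
    rw [Nat.add_sub_cancel_left]
    nlinarith [(Finset.mem_Icc.1 hi).1]
  · omega
  · nlinarith [Nat.zero_le n]

theorem span_cMon_eq_top :
    Submodule.span ℤ (Set.range fun S : Finset ℕ => cMon S.val) = ⊤ := by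
  refine eq_top_iff.2 fun x _ => ?_
  obtain ⟨F, rfl⟩ := Ideal.Quotient.mk_surjective x
  rw [F.as_sum, map_sum]
  refine Submodule.sum_mem _ fun d _ => ?_
  rw [← mul_one (coeff d F), ← smul_eq_mul, ← smul_monomial, map_zsmul,
    ← Finsupp.toMultiset_toFinsupp d, ← cMon_eq_mk]
  exact Submodule.smul_mem _ _ (cMon_mem_span _)

open Nat.Partition

theorem realize_cMon (m : Multiset ℕ) :
    realize (cMon m) = (m.map fun k => 2 * beta ℚ k).prod := by
  rw [cMon, map_multiset_prod, Multiset.map_map]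
  exact congrArg _ (Multiset.map_congr rfl fun k _ => realize_cGen k)

theorem isWeightedHomogeneous_realize_cMon (m : Multiset ℕ) :
    IsWeightedHomogeneous oddWeight (realize (cMon m)) (partSum m) := by
  rw [realize_cMon]
  refine IsWeightedHomogeneous.multiset_prod _ _ _ fun k _ => ?_
  rw [two_mul]
  exact (isWeightedHomogeneous_beta k).add (isWeightedHomogeneous_beta k)

theorem realize_mem_span (x : GammaR) :
    realize x ∈ Submodule.span ℚ (Set.range fun S : Finset ℕ => realize (cMon S.val)) := by
  have hx := Submodule.mem_map_of_mem (f := realize.toIntAlgHom.toLinearMap)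
    (span_cMon_eq_top ▸ Submodule.mem_top (x := x))
  rw [Submodule.map_span, ← Set.range_comp] at hx
  exact Submodule.span_le_restrictScalars ℤ ℚ _ hx

theorem realize_cMon_mem_span_partSum (m : Multiset ℕ) :
    realize (cMon m) ∈ Submodule.span ℚ
      (Set.range fun S : {S : Finset ℕ // partSum S.val = partSum m} => realize (cMon S.1.val)) := by
  have h := weightedHomogeneousComponent_mem_span
    (fun S : Finset ℕ => isWeightedHomogeneous_realize_cMon S.val) (realize_mem_span (cMon m))
    (partSum m)
  rwa [(isWeightedHomogeneous_realize_cMon m).weightedHomogeneousComponent_same] at h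

theorem monomial_mem_span_partSum (s : Multiset ℕ) :
    monomial (Multiset.toFinsupp s) (1 : ℚ) ∈ Submodule.span ℚ
      (Set.range fun S : {S : Finset ℕ // partSum S.val = (s.map oddWeight).sum} =>
        realize (cMon S.1.val)) := by
  have hreal : realize (cMon (s.map (2 * ·))) =
      ((2 : ℚ) ^ Multiset.card s) • monomial (Multiset.toFinsupp s) 1 := by
    rw [realize_cMon, Multiset.map_map, smul_eq_C_mul, map_pow, map_ofNat, ← prod_map_X,
      ← Multiset.prod_replicate, ← Multiset.map_const', ← Multiset.prod_map_mul]
    exact congrArg _ (Multiset.map_congr rfl fun k _ => by simp [beta_even])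
  have h := realize_cMon_mem_span_partSum (s.map (2 * ·))
  rw [hreal, show partSum (s.map (2 * ·)) = (s.map oddWeight).sum by
    rw [partSum, Multiset.map_map]; rfl] at h
  simpa using Submodule.smul_mem _ ((2 : ℚ) ^ Multiset.card s)⁻¹ h

theorem map_half_map_oddWeight {N : ℕ} (μ : odds N) :
    (μ.1.parts.map (· / 2)).map oddWeight = μ.1.parts := by
  rw [Multiset.map_map]
  conv_rhs => rw [← Multiset.map_id μ.1.parts]
  refine Multiset.map_congr rfl fun n hn => ?_
  have hodd : ¬ Even n := (Finset.mem_filter.1 μ.2).2 n hn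
  simp only [Function.comp_apply, oddWeight, id]
  rw [Nat.not_even_iff_odd] at hodd
  obtain ⟨k, rfl⟩ := hodd
  omega

theorem linearIndependent_oddMonomial (N : ℕ) :
    LinearIndependent ℚ fun μ : odds N =>
      monomial (Multiset.toFinsupp (μ.1.parts.map (· / 2))) (1 : ℚ) := by
  have hinj : Function.Injective fun μ : odds N => Multiset.toFinsupp (μ.1.parts.map (· / 2)) := by
    intro μ ν h
    apply Subtype.ext
    apply Nat.Partition.ext
    rw [← map_half_map_oddWeight μ, ← map_half_map_oddWeight ν, Multiset.toFinsupp.injective h]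
  have h := (basisMonomials ℕ ℚ).linearIndependent.comp _ hinj
  rw [coe_basisMonomials] at h
  exact h

theorem exists_injective_distincts (N : ℕ) :
    ∃ f : {S : Finset ℕ // partSum S.val = N} → distincts N, Function.Injective f := by
  refine ⟨fun S => ⟨⟨S.1.val.map (· + 1), ?_, S.2⟩, ?_⟩, fun S T h => ?_⟩
  · intro i hi
    obtain ⟨k, _, rfl⟩ := Multiset.mem_map.1 hi
    omega
  · simpa [distincts] using S.1.nodup.map (add_left_injective 1)
  · have h' := congrArg (fun μ : distincts N => μ.1.parts) h
    exact Subtype.ext (Finset.val_injective (Multiset.map_injective (add_left_injective 1) h'))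

theorem linearIndependent_realize_cMon_partSum (N : ℕ) :
    LinearIndependent ℚ
      fun S : {S : Finset ℕ // partSum S.val = N} => realize (cMon S.1.val) := by
  obtain ⟨f, hf⟩ := exists_injective_distincts N
  have : Finite {S : Finset ℕ // partSum S.val = N} := Finite.of_injective f hf
  have := Fintype.ofFinite {S : Finset ℕ // partSum S.val = N}
  have : FiniteDimensional ℚ (Submodule.span ℚ (Set.range
      fun S : {S : Finset ℕ // partSum S.val = N} => realize (cMon S.1.val))) :=
    FiniteDimensional.span_of_finite ℚ (Set.finite_range _)
  rw [linearIndependent_iff_card_le_finrank_span]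
  calc Fintype.card _ ≤ Fintype.card (distincts N) := Fintype.card_le_of_injective f hf
    _ = Fintype.card (odds N) := by simp [card_odds_eq_card_distincts]
    _ = Module.finrank ℚ (Submodule.span ℚ (Set.range fun μ : odds N =>
          monomial (Multiset.toFinsupp (μ.1.parts.map (· / 2))) (1 : ℚ))) :=
        (finrank_span_eq_card (linearIndependent_oddMonomial N)).symm
    _ ≤ _ := Submodule.finrank_mono <| Submodule.span_le.2 <| Set.range_subset_iff.2 fun μ => by
        have h := monomial_mem_span_partSum (μ.1.parts.map (· / 2))
        rwa [map_half_map_oddWeight, μ.1.parts_sum] at h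

theorem injective_realize : Function.Injective realize := by
  have hli : LinearIndependent ℚ fun S : Finset ℕ => realize (cMon S.val) :=
    LinearIndependent.of_isWeightedHomogeneous (fun S => isWeightedHomogeneous_realize_cMon S.val)
      linearIndependent_realize_cMon_partSum
  have hker := Submodule.range_ker_disjoint (f := realize.toIntAlgHom.toLinearMap)
    (hli.restrict_scalars' ℤ)
  rw [span_cMon_eq_top, top_disjoint] at hker
  exact LinearMap.ker_eq_bot.1 hker

theorem injective_toGammaP : Function.Injective toGammaP :=
  Function.Injective.of_comp (f := evalBeta) injective_realize

end SchurQ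

/-- The map `Γ → Γ'` sending `c_p ↦ 2 b_p` for all `p ≥ 1` is a well-defined
injective ring homomorphism. -/
theorem gamma_to_gammaP :
    ∃ f : GammaR →+* GammaPR,
      Function.Injective f ∧ ∀ p : ℤ, 1 ≤ p → f (cQ p) = 2 * bQ p :=
  ⟨SchurQ.toGammaP, SchurQ.injective_toGammaP, fun _ => SchurQ.toGammaP_cQ⟩
end
end

section
/- Let $w \in W_\infty$ and $i < j$ positive integers, and let $\bar{t}_{ij}$ be the reflection acting on the right by $(\ldots, w_i, \ldots, w_j, \ldots)\bar{t}_{ij} = (\ldots, -w_j, \ldots, -w_i, \ldots)$. Then $\ell(w \bar{t}_{ij}) = \ell(w) + 1$ if and only if: (i) $-w_i < w_j$, (ii) $w_i < 0$ or $w_j < 0$, and (iii) there is no $p < i$ with $-w_j < w_p < w_i$ and no $p < j$ with $-w_i < w_p < w_j$. -/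
/-- A finitely supported signed permutation of the positive integers. -/
def IsSignedPerm (π : Equiv.Perm ℤ) : Prop :=
  (∀ k : ℤ, π (-k) = - π k) ∧ ∃ N : ℕ, ∀ k : ℤ, (N : ℤ) < |k| → π k = k

/-- The type C simple reflections. -/
def genC : ℕ → Equiv.Perm ℤ
  | 0 => Equiv.swap 1 (-1)
  | (i + 1) => Equiv.swap ((i : ℤ) + 1) ((i : ℤ) + 2) *
      Equiv.swap (-((i : ℤ) + 1)) (-((i : ℤ) + 2))

/-- The type C Coxeter length. -/
noncomputable def lenC (π : Equiv.Perm ℤ) : ℕ :=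
  sInf {m | ∃ l : List (Equiv.Perm ℤ),
    (∀ x ∈ l, ∃ i, x = genC i) ∧ l.length = m ∧ l.prod = π}

/-- The reflection `t̄_{ij}` (for `0 < i < j`), whose right action on a signed
permutation interchanges the entries in positions `i` and `j` and changes
both of their signs. -/
def tbar (i j : ℤ) : Equiv.Perm ℤ := Equiv.swap i (-j) * Equiv.swap (-i) j

/-!
By the formula of Björner–Brenti, the length of a signed permutation `w` supported in `[-N, N]`
is the number of inversions `p < q`, `w p > w q` in `[1, N]` plus the number of pairs `p ≤ q`
with `w p + w q < 0`: each generator changes this count by `±1`, and unless `w = 1` some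
generator lowers it. Right multiplication by `t̄_{ij}` only changes the pairs meeting `{i, j}`.
When `w i + w j > 0`, the pair `{i, j}` itself gains `1` if `w i` or `w j` is negative and `3`
otherwise, every position `p` violating (iii) gains `2` more, and all other positions are
unchanged. When `w i + w j < 0`, the same count applied to `w t̄_{ij}` shows that the length drops.
-/

open Finset

def FixedBeyond (N : ℤ) (w : Equiv.Perm ℤ) : Prop := ∀ k : ℤ, N < |k| → w k = k

section SignedPerm

variable {w : Equiv.Perm ℤ}

lemma Function.Odd.apply_ne_neg_apply (hw : (⇑w).Odd) {k m : ℤ} (h : k ≠ -m) :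
    w k ≠ -w m := by
  rw [← hw m]
  exact w.injective.ne h

lemma Function.Odd.apply_ne_zero (hw : (⇑w).Odd) {k : ℤ} (hk : k ≠ 0) : w k ≠ 0 := by
  rw [← hw.map_zero]
  exact w.injective.ne hk

lemma Function.Odd.perm_mul {v : Equiv.Perm ℤ} (hw : (⇑w).Odd) (hv : (⇑v).Odd) :
    (⇑(w * v)).Odd := by
  rw [Equiv.Perm.coe_mul]
  exact hw.comp_odd hv

lemma FixedBeyond.abs_apply_le {N : ℤ} (hw : FixedBeyond N w) {x : ℤ} (hx : |x| ≤ N) :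
    |w x| ≤ N := by
  by_contra! h
  have hfix : w x = x := w.injective (hw (w x) h)
  rw [hfix] at h
  omega

lemma FixedBeyond.mul {N : ℤ} {v : Equiv.Perm ℤ} (hw : FixedBeyond N w) (hv : FixedBeyond N v) :
    FixedBeyond N (w * v) := by
  intro k hk
  rw [Equiv.Perm.mul_apply, hv k hk, hw k hk]

end SignedPerm

lemma genC_zero_apply (x : ℤ) : genC 0 x = if x = 1 then -1 else if x = -1 then 1 else x := by
  simp [genC, Equiv.swap_apply_def]

lemma genC_succ_apply (k : ℕ) (x : ℤ) :
    genC (k + 1) x =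
      if x = (k : ℤ) + 1 then (k : ℤ) + 2 else if x = (k : ℤ) + 2 then (k : ℤ) + 1 else
      if x = -((k : ℤ) + 1) then -((k : ℤ) + 2) else
      if x = -((k : ℤ) + 2) then -((k : ℤ) + 1) else x := by
  simp only [genC, Equiv.Perm.mul_apply, Equiv.swap_apply_def]
  split_ifs <;> omega

lemma genC_odd (k : ℕ) : (⇑(genC k)).Odd := by
  intro x
  cases k with
  | zero => simp only [genC_zero_apply]; split_ifs <;> omega
  | succ k => simp only [genC_succ_apply]; split_ifs <;> omega

lemma genC_fixedBeyond {N : ℤ} {k : ℕ} (hk : (k : ℤ) + 1 ≤ N) : FixedBeyond N (genC k) := by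
  intro x hx
  rw [lt_abs] at hx
  cases k with
  | zero => rw [genC_zero_apply]; split_ifs <;> omega
  | succ k => rw [genC_succ_apply]; split_ifs <;> omega

lemma genC_mul_self (k : ℕ) : genC k * genC k = 1 := by
  ext x
  simp only [Equiv.Perm.mul_apply, Equiv.Perm.one_apply]
  cases k with
  | zero => simp only [genC, Equiv.swap_apply_self]
  | succ k => rw [genC_succ_apply, genC_succ_apply]; split_ifs <;> omega

lemma odd_prod_of_forall_mem_genC {l : List (Equiv.Perm ℤ)} (hl : ∀ x ∈ l, ∃ k, x = genC k) :
    (⇑l.prod).Odd := by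
  induction l with
  | nil => intro x; simp
  | cons x l ih =>
    obtain ⟨k, rfl⟩ := hl x List.mem_cons_self
    rw [List.prod_cons]
    exact (genC_odd k).perm_mul (ih fun y hy => hl y (List.mem_cons_of_mem _ hy))

section Tbar

variable {i j : ℤ}

lemma tbar_apply (hi : 0 < i) (hij : i < j) (x : ℤ) :
    tbar i j x = if x = -j then i else if x = i then -j else
      if x = j then -i else if x = -i then j else x := by
  simp only [tbar, Equiv.Perm.mul_apply, Equiv.swap_apply_def]
  split_ifs <;> omega

lemma tbar_apply_left (hi : 0 < i) (hij : i < j) : tbar i j i = -j := by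
  rw [tbar_apply hi hij]; split_ifs <;> omega

lemma tbar_apply_right (hi : 0 < i) (hij : i < j) : tbar i j j = -i := by
  rw [tbar_apply hi hij]; split_ifs <;> omega

lemma tbar_apply_of_ne {x : ℤ} (hi : 0 < i) (hij : i < j) (hx : 0 < x) (hxi : x ≠ i)
    (hxj : x ≠ j) : tbar i j x = x := by
  rw [tbar_apply hi hij]; split_ifs <;> omega

lemma tbar_odd (hi : 0 < i) (hij : i < j) : (⇑(tbar i j)).Odd := by
  intro x
  simp only [tbar_apply hi hij]
  split_ifs <;> omega

lemma tbar_mul_self (hi : 0 < i) (hij : i < j) : tbar i j * tbar i j = 1 := by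
  ext x
  simp only [Equiv.Perm.mul_apply, Equiv.Perm.one_apply, tbar_apply hi hij]
  split_ifs <;> omega

lemma tbar_fixedBeyond {N : ℤ} (hi : 0 < i) (hij : i < j) (hjN : j ≤ N) :
    FixedBeyond N (tbar i j) := by
  intro x hx
  rw [lt_abs] at hx
  rw [tbar_apply hi hij]; split_ifs <;> omega

end Tbar

lemma Finset.sum_sum_eq_pair_add {α M : Type*} [DecidableEq α] [AddCommMonoid M]
    {s : Finset α} {i j : α} (hi : i ∈ s) (hj : j ∈ s) (hij : i ≠ j) (F : α → α → M) :
    ∑ p ∈ s, ∑ q ∈ s, F p q =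
      (F i i + F i j + F j i + F j j) + ∑ p ∈ s \ {i, j}, (F p i + F p j + F i p + F j p) +
        ∑ p ∈ s \ {i, j}, ∑ q ∈ s \ {i, j}, F p q := by
  have split (f : α → M) : ∑ x ∈ s, f x = f i + f j + ∑ x ∈ s \ {i, j}, f x := by
    rw [← sum_sdiff (insert_subset hi (singleton_subset_iff.2 hj)), sum_pair hij, add_comm]
  simp only [split, sum_add_distrib]
  abel

lemma mem_Icc_sdiff_pair {N u v p : ℤ} :
    p ∈ Icc 1 N \ {u, v} ↔ 1 ≤ p ∧ p ≤ N ∧ p ≠ u ∧ p ≠ v := by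
  simp only [mem_sdiff, mem_Icc, mem_insert, mem_singleton]
  tauto

def pairWeight (p q a b : ℤ) : ℤ :=
  (if p < q ∧ b < a then 1 else 0) + (if p ≤ q ∧ a + b < 0 then 1 else 0)

/-- The length formula of Björner–Brenti (Prop. 8.1.1) for `w` supported in `[-N, N]`; the
diagonal `p = q` of the second indicator in `pairWeight` counts the negative entries. -/
noncomputable def invCount (N : ℤ) (w : Equiv.Perm ℤ) : ℤ :=
  ∑ p ∈ Icc 1 N, ∑ q ∈ Icc 1 N, pairWeight p q (w p) (w q)

section PairWeight

variable {p q : ℤ}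

lemma pairWeight_nonneg (p q a b : ℤ) : 0 ≤ pairWeight p q a b := by
  unfold pairWeight; split_ifs <;> omega

lemma pairWeight_of_lt (h : p < q) (a b : ℤ) :
    pairWeight p q a b = (if b < a then 1 else 0) + (if a + b < 0 then 1 else 0) := by
  simp only [pairWeight, h, h.le, true_and]

lemma pairWeight_of_gt (h : q < p) (a b : ℤ) : pairWeight p q a b = 0 := by
  simp only [pairWeight, h.not_gt, h.not_ge, false_and, if_false, add_zero]

lemma pairWeight_self (p a b : ℤ) : pairWeight p p a b = if a + b < 0 then 1 else 0 := by
  simp [pairWeight]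

end PairWeight

lemma invCount_nonneg (N : ℤ) (w : Equiv.Perm ℤ) : 0 ≤ invCount N w :=
  sum_nonneg fun _ _ => sum_nonneg fun _ _ => pairWeight_nonneg _ _ _ _

lemma invCount_one (N : ℤ) : invCount N 1 = 0 := by
  refine sum_eq_zero fun p hp => sum_eq_zero fun q hq => ?_
  rw [mem_Icc] at hp hq
  simp only [pairWeight, Equiv.Perm.one_apply]
  split_ifs <;> omega

lemma invCount_mono {N M : ℤ} (hNM : N ≤ M) (w : Equiv.Perm ℤ) :
    invCount N w ≤ invCount M w := by
  have hsub : Icc 1 N ⊆ Icc 1 M := Icc_subset_Icc_right hNM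
  calc invCount N w ≤ ∑ p ∈ Icc 1 N, ∑ q ∈ Icc 1 M, pairWeight p q (w p) (w q) :=
        sum_le_sum fun p _ => sum_le_sum_of_subset_of_nonneg hsub fun _ _ _ => pairWeight_nonneg ..
    _ ≤ invCount M w :=
        sum_le_sum_of_subset_of_nonneg hsub fun _ _ _ => sum_nonneg fun _ _ => pairWeight_nonneg ..

/-- The pairs between position `p`, holding `c`, and positions `u, v`, holding `a, b`. -/
def crossWeight (u v p a b c : ℤ) : ℤ :=
  pairWeight p u c a + pairWeight p v c b + pairWeight u p a c + pairWeight v p b c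

def cornerWeight (u v a b : ℤ) : ℤ :=
  pairWeight u u a a + pairWeight u v a b + pairWeight v u b a + pairWeight v v b b

lemma invCount_eq_of_eqOn_sdiff_pair {N u v : ℤ} {w w' : Equiv.Perm ℤ} (hu : u ∈ Icc 1 N)
    (hv : v ∈ Icc 1 N) (huv : u ≠ v) (h : ∀ p ∈ Icc 1 N \ {u, v}, w' p = w p) :
    invCount N w' = invCount N w +
      (cornerWeight u v (w' u) (w' v) - cornerWeight u v (w u) (w v)) +
      ∑ p ∈ Icc 1 N \ {u, v},
        (crossWeight u v p (w' u) (w' v) (w p) - crossWeight u v p (w u) (w v) (w p)) := by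
  rw [invCount, invCount, sum_sum_eq_pair_add hu hv huv, sum_sum_eq_pair_add hu hv huv,
    sum_congr rfl fun p hp => sum_congr rfl fun q hq => by rw [h p hp, h q hq],
    sum_congr rfl fun p hp => by rw [h p hp], sum_sub_distrib]
  unfold crossWeight cornerWeight
  ring

section Weights

variable {u v p a b c : ℤ}

lemma crossWeight_swap (hp : p < u ∨ v < p) (huv : u < v) :
    crossWeight u v p b a c = crossWeight u v p a b c := by
  rcases hp with hp | hp
  · simp only [crossWeight, pairWeight_of_lt hp, pairWeight_of_lt (hp.trans huv),
      pairWeight_of_gt hp, pairWeight_of_gt (hp.trans huv)]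
    ring
  · simp only [crossWeight, pairWeight_of_lt hp, pairWeight_of_lt (huv.trans hp),
      pairWeight_of_gt hp, pairWeight_of_gt (huv.trans hp)]
    ring

lemma cornerWeight_swap (huv : u < v) (hab : a ≠ b) :
    cornerWeight u v b a = cornerWeight u v a b + if a < b then 1 else -1 := by
  simp only [cornerWeight, pairWeight_self, pairWeight_of_lt huv, pairWeight_of_gt huv]
  split_ifs <;> omega

lemma crossWeight_neg_left (hp : u < p) : crossWeight u v p (-a) b c = crossWeight u v p a b c := by
  simp only [crossWeight, pairWeight_of_lt hp, pairWeight_of_gt hp]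
  split_ifs <;> omega

lemma cornerWeight_neg_left (huv : u < v) (ha : a ≠ 0) :
    cornerWeight u v (-a) b = cornerWeight u v a b + if 0 < a then 1 else -1 := by
  simp only [cornerWeight, pairWeight_self, pairWeight_of_lt huv, pairWeight_of_gt huv]
  split_ifs <;> omega

lemma crossWeight_tbar (huv : u < v) (hpu : p ≠ u) (hpv : p ≠ v) (hab : 0 < a + b)
    (hca : c ≠ a) (hcb : c ≠ b) (hcna : c ≠ -a) (hcnb : c ≠ -b) :
    crossWeight u v p (-b) (-a) c = crossWeight u v p a b c +
      2 * ((if p < u ∧ -b < c ∧ c < a then 1 else 0) + if p < v ∧ -a < c ∧ c < b then 1 else 0) := by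
  rcases lt_or_gt_of_ne hpu with hpu | hpu
  · have hpv : p < v := hpu.trans huv
    simp only [crossWeight, pairWeight_of_lt hpu, pairWeight_of_lt hpv, pairWeight_of_gt hpu,
      pairWeight_of_gt hpv, hpu, hpv, true_and]
    grind
  rcases lt_or_gt_of_ne hpv with hpv | hpv
  · simp only [crossWeight, pairWeight_of_lt hpu, pairWeight_of_lt hpv, pairWeight_of_gt hpu,
      pairWeight_of_gt hpv, hpu.not_gt, hpv, true_and, false_and]
    grind
  · simp only [crossWeight, pairWeight_of_lt hpu, pairWeight_of_lt hpv, pairWeight_of_gt hpu,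
      pairWeight_of_gt hpv, hpu.not_gt, hpv.not_gt, false_and]
    grind

lemma cornerWeight_tbar (huv : u < v) (ha : a ≠ 0) (hb : b ≠ 0) (hab : 0 < a + b) :
    cornerWeight u v (-b) (-a) = cornerWeight u v a b + if a < 0 ∨ b < 0 then 1 else 3 := by
  simp only [cornerWeight, pairWeight_self, pairWeight_of_lt huv, pairWeight_of_gt huv]
  split_ifs <;> omega

end Weights

/-- The violations of condition (iii) of the covering criterion, among positions up to `N`. -/
noncomputable def tbarObstructions (N i j : ℤ) (w : Equiv.Perm ℤ) : ℤ :=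
  ∑ p ∈ Icc 1 N \ {i, j}, ((if p < i ∧ -w j < w p ∧ w p < w i then 1 else 0) +
    if p < j ∧ -w i < w p ∧ w p < w j then 1 else 0)

lemma tbarObstructions_nonneg (N i j : ℤ) (w : Equiv.Perm ℤ) : 0 ≤ tbarObstructions N i j w :=
  sum_nonneg fun _ _ => by positivity

section Multiplication

variable {N : ℤ} {w : Equiv.Perm ℤ}

lemma invCount_mul_genC_zero (hw : (⇑w).Odd) (hN : 2 ≤ N) :
    invCount N (w * genC 0) = invCount N w + if 0 < w 1 then 1 else -1 := by
  have hfix : ∀ p ∈ Icc 1 N \ {1, 2}, (w * genC 0) p = w p := by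
    intro p hp
    rw [mem_Icc_sdiff_pair] at hp
    rw [Equiv.Perm.mul_apply, genC_zero_apply, if_neg (by omega), if_neg (by omega)]
  have h1 : (w * genC 0) 1 = -w 1 := by
    rw [Equiv.Perm.mul_apply, genC_zero_apply, if_pos rfl, hw]
  have h2 : (w * genC 0) 2 = w 2 := by
    rw [Equiv.Perm.mul_apply, genC_zero_apply, if_neg (by norm_num), if_neg (by norm_num)]
  rw [invCount_eq_of_eqOn_sdiff_pair (by simp; omega) (by simp; omega) (by norm_num) hfix, h1, h2,
    cornerWeight_neg_left one_lt_two (hw.apply_ne_zero one_ne_zero),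
    sum_eq_zero fun p hp => by
      rw [crossWeight_neg_left (by rw [mem_Icc_sdiff_pair] at hp; omega), sub_self]]
  ring

lemma invCount_mul_genC_succ (k : ℕ) (hk : (k : ℤ) + 2 ≤ N) :
    invCount N (w * genC (k + 1)) = invCount N w + if w (k + 1) < w (k + 2) then 1 else -1 := by
  have hfix : ∀ p ∈ Icc 1 N \ {(k : ℤ) + 1, (k : ℤ) + 2}, (w * genC (k + 1)) p = w p := by
    intro p hp
    rw [mem_Icc_sdiff_pair] at hp
    rw [Equiv.Perm.mul_apply, genC_succ_apply, if_neg (by omega), if_neg (by omega),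
      if_neg (by omega), if_neg (by omega)]
  have h1 : (w * genC (k + 1)) (k + 1) = w (k + 2) := by
    rw [Equiv.Perm.mul_apply, genC_succ_apply, if_pos rfl]
  have h2 : (w * genC (k + 1)) (k + 2) = w (k + 1) := by
    rw [Equiv.Perm.mul_apply, genC_succ_apply, if_neg (by omega), if_pos rfl]
  have hlt : (k : ℤ) + 1 < k + 2 := by omega
  rw [invCount_eq_of_eqOn_sdiff_pair (by simp; omega) (by simp; omega) hlt.ne hfix, h1, h2,
    cornerWeight_swap hlt (w.injective.ne hlt.ne),
    sum_eq_zero fun p hp => by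
      rw [crossWeight_swap (by rw [mem_Icc_sdiff_pair] at hp; omega) hlt, sub_self]]
  ring

lemma invCount_mul_tbar {i j : ℤ} (hw : (⇑w).Odd) (hi : 0 < i) (hij : i < j) (hjN : j ≤ N)
    (hpos : 0 < w i + w j) :
    invCount N (w * tbar i j) =
      invCount N w + (if w i < 0 ∨ w j < 0 then 1 else 3) + 2 * tbarObstructions N i j w := by
  have hfix : ∀ p ∈ Icc 1 N \ {i, j}, (w * tbar i j) p = w p := by
    intro p hp
    rw [mem_Icc_sdiff_pair] at hp
    rw [Equiv.Perm.mul_apply, tbar_apply_of_ne hi hij (by omega) hp.2.2.1 hp.2.2.2]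
  have hwi : (w * tbar i j) i = -w j := by
    rw [Equiv.Perm.mul_apply, tbar_apply_left hi hij, hw]
  have hwj : (w * tbar i j) j = -w i := by
    rw [Equiv.Perm.mul_apply, tbar_apply_right hi hij, hw]
  rw [invCount_eq_of_eqOn_sdiff_pair (by simp; omega) (by simp; omega) hij.ne hfix, hwi, hwj,
    cornerWeight_tbar hij (hw.apply_ne_zero hi.ne') (hw.apply_ne_zero (by omega)) hpos,
    add_sub_cancel_left, tbarObstructions, mul_sum]
  congr 1
  refine sum_congr rfl fun p hp => ?_
  rw [mem_Icc_sdiff_pair] at hp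
  obtain ⟨hp1, -, hpi, hpj⟩ := hp
  rw [crossWeight_tbar hij hpi hpj hpos (w.injective.ne hpi) (w.injective.ne hpj)
    (hw.apply_ne_neg_apply (by omega)) (hw.apply_ne_neg_apply (by omega)), add_sub_cancel_left]

end Multiplication

section Length

variable {N : ℤ} {w : Equiv.Perm ℤ}

lemma invCount_mul_genC_le (hw : (⇑w).Odd) {k : ℕ} (hk : (k : ℤ) + 2 ≤ N) :
    invCount N (w * genC k) ≤ invCount N w + 1 := by
  cases k with
  | zero => rw [invCount_mul_genC_zero hw (by omega)]; split_ifs <;> omega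
  | succ k => rw [invCount_mul_genC_succ k (by push_cast at hk; omega)]; split_ifs <;> omega

lemma invCount_prod_le_length {l : List (Equiv.Perm ℤ)} (hl : ∀ x ∈ l, ∃ k, x = genC k)
    (N : ℤ) : invCount N l.prod ≤ l.length := by
  induction l using List.reverseRecOn generalizing N with
  | nil => simp [invCount_one]
  | append_singleton l x ih =>
    obtain ⟨k, rfl⟩ := hl x (by simp)
    have hl' : ∀ y ∈ l, ∃ k, y = genC k := fun y hy => hl y (by simp [hy])
    -- each generator changes `invCount M` by at most one once `M` covers the positions it moves
    set M := max N (k + 2)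
    rw [List.prod_append, List.prod_singleton, List.length_append, List.length_singleton]
    calc invCount N (l.prod * genC k) ≤ invCount M (l.prod * genC k) :=
          invCount_mono (le_max_left ..) _
      _ ≤ invCount M l.prod + 1 :=
          invCount_mul_genC_le (odd_prod_of_forall_mem_genC hl') (le_max_right ..)
      _ ≤ _ := by push_cast; linarith [ih hl' M]

lemma eq_one_of_forall_lt_apply_add_one (hw : (⇑w).Odd) (hfix : FixedBeyond N w)
    (h1 : 0 < w 1) (hmono : ∀ p, 1 ≤ p → p < N → w p < w (p + 1)) : w = 1 := by
  have chain : ∀ p q, 1 ≤ p → p ≤ q → q ≤ N → w p + (q - p) ≤ w q := by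
    intro p q hp hpq hqN
    induction q, hpq using Int.leInduction with
    | base => simp
    | succ q hpq ih => have := hmono q (by omega) (by omega); have := ih (by omega); omega
  have hpos : ∀ p, 1 ≤ p → w p = p := by
    intro p hp
    by_cases hpN : p ≤ N
    · have hwN := (abs_le.1 (hfix.abs_apply_le (x := N) (by rw [abs_of_pos (by omega)]))).2
      have := chain 1 p le_rfl hp hpN
      have := chain p N hp hpN le_rfl
      omega
    · exact hfix p (by rw [abs_of_pos (by omega)]; omega)
  ext x
  rcases lt_trichotomy x 0 with hx | rfl | hx
  · rw [Equiv.Perm.one_apply, ← neg_neg x, hw, hpos (-x) (by omega)]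
  · exact hw.map_zero
  · exact hpos x hx

lemma exists_invCount_mul_genC_add_one_eq (hw : (⇑w).Odd) (hN : 2 ≤ N) (hfix : FixedBeyond N w)
    (hne : w ≠ 1) : ∃ k : ℕ, (k : ℤ) + 1 ≤ N ∧ invCount N (w * genC k) + 1 = invCount N w := by
  by_cases h1 : w 1 < 0
  · exact ⟨0, by omega, by rw [invCount_mul_genC_zero hw hN, if_neg (by omega)]; ring⟩
  obtain ⟨p, hp1, hpN, hdesc⟩ : ∃ p, 1 ≤ p ∧ p < N ∧ w (p + 1) < w p := by
    by_contra! hmono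
    refine hne (eq_one_of_forall_lt_apply_add_one hw hfix ?_ fun p hp hpN => ?_)
    · have := hw.apply_ne_zero one_ne_zero
      omega
    · have := hmono p hp hpN
      have := w.injective.ne (show p ≠ p + 1 by omega)
      omega
  obtain ⟨k, rfl⟩ : ∃ k : ℕ, p = k + 1 := ⟨(p - 1).toNat, by omega⟩
  rw [show (k : ℤ) + 1 + 1 = k + 2 by ring] at hdesc
  refine ⟨k + 1, by push_cast; omega, ?_⟩
  rw [invCount_mul_genC_succ k (by omega), if_neg (by omega)]
  ring

lemma exists_word_length_eq_invCount (hw : (⇑w).Odd) (hN : 2 ≤ N) (hfix : FixedBeyond N w) :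
    ∃ l : List (Equiv.Perm ℤ), (∀ x ∈ l, ∃ k, x = genC k) ∧ (l.length : ℤ) = invCount N w ∧
      l.prod = w := by
  obtain ⟨n, hn⟩ : ∃ n : ℕ, invCount N w = n :=
    ⟨_, (Int.toNat_of_nonneg (invCount_nonneg N w)).symm⟩
  induction n generalizing w with
  | zero =>
    obtain rfl : w = 1 := by
      by_contra hne
      obtain ⟨k, -, hk⟩ := exists_invCount_mul_genC_add_one_eq hw hN hfix hne
      have := invCount_nonneg N (w * genC k)
      push_cast at hn
      omega
    exact ⟨[], by simp, by simp [invCount_one], by simp⟩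
  | succ n ih =>
    have hne : w ≠ 1 := by
      rintro rfl
      rw [invCount_one] at hn
      omega
    obtain ⟨k, hk, hdesc⟩ := exists_invCount_mul_genC_add_one_eq hw hN hfix hne
    obtain ⟨l, hl, hlen, hprod⟩ := ih (hw.perm_mul (genC_odd k))
      (hfix.mul (genC_fixedBeyond hk)) (by push_cast at hn; omega)
    refine ⟨l ++ [genC k], fun x hx => ?_, ?_, ?_⟩
    · rcases List.mem_append.1 hx with hx | hx
      exacts [hl x hx, ⟨k, List.mem_singleton.1 hx⟩]
    · rw [List.length_append, List.length_singleton]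
      push_cast
      omega
    · rw [List.prod_append, List.prod_singleton, hprod, mul_assoc, genC_mul_self, mul_one]

theorem lenC_eq_invCount (hw : (⇑w).Odd) (hN : 2 ≤ N) (hfix : FixedBeyond N w) :
    (lenC w : ℤ) = invCount N w := by
  obtain ⟨l, hl, hlen, hprod⟩ := exists_word_length_eq_invCount hw hN hfix
  have hleast : IsLeast {m | ∃ l' : List (Equiv.Perm ℤ),
      (∀ x ∈ l', ∃ i, x = genC i) ∧ l'.length = m ∧ l'.prod = w} l.length := by
    refine ⟨⟨l, hl, rfl, hprod⟩, ?_⟩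
    rintro m ⟨l', hl', rfl, hprod'⟩
    have := invCount_prod_le_length hl' N
    rw [hprod'] at this
    omega
  rw [lenC, hleast.csInf_eq, hlen]

end Length

section Covering

variable {N i j : ℤ} {w : Equiv.Perm ℤ}

lemma tbarObstructions_eq_zero_iff (hi : 0 < i) (hij : i < j) (hjN : j ≤ N)
    (hneg : w i < 0 ∨ w j < 0) :
    tbarObstructions N i j w = 0 ↔
      (∀ p : ℤ, 0 < p → p < i → ¬(-w j < w p ∧ w p < w i)) ∧
        (∀ p : ℤ, 0 < p → p < j → ¬(-w i < w p ∧ w p < w j)) := by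
  rw [tbarObstructions, sum_eq_zero_iff_of_nonneg fun p _ => by positivity]
  constructor
  · intro h
    refine ⟨fun p hp hpi hbad => ?_, fun p hp hpj hbad => ?_⟩
    · have := h p (mem_Icc_sdiff_pair.2 ⟨hp, by omega, hpi.ne, by omega⟩)
      split_ifs at this <;> omega
    · -- `p = i` is excluded by `hneg`
      have := h p (mem_Icc_sdiff_pair.2 ⟨hp, by omega, fun h => by subst h; omega, hpj.ne⟩)
      split_ifs at this <;> omega
  · rintro ⟨h1, h2⟩ p hp
    rw [mem_Icc_sdiff_pair] at hp
    have := h1 p (by omega)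
    have := h2 p (by omega)
    split_ifs <;> omega

lemma invCount_mul_tbar_eq_add_one_iff (hw : (⇑w).Odd) (hi : 0 < i) (hij : i < j) (hjN : j ≤ N) :
    invCount N (w * tbar i j) = invCount N w + 1 ↔
      (-w i < w j ∧ (w i < 0 ∨ w j < 0) ∧
        (∀ p : ℤ, 0 < p → p < i → ¬(-w j < w p ∧ w p < w i)) ∧
        (∀ p : ℤ, 0 < p → p < j → ¬(-w i < w p ∧ w p < w j))) := by
  have hsum : w i + w j ≠ 0 := by
    have := hw.apply_ne_neg_apply (k := i) (m := j) (by omega)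
    omega
  rcases hsum.lt_or_gt with hneg | hpos
  · -- `w t̄` has entries `-w j, -w i` of positive sum in positions `i, j`, and `(w t̄) t̄ = w`
    have key := invCount_mul_tbar (w := w * tbar i j) (hw.perm_mul (tbar_odd hi hij)) hi hij hjN
      (by rw [Equiv.Perm.mul_apply, Equiv.Perm.mul_apply, tbar_apply_left hi hij,
          tbar_apply_right hi hij, hw, hw]; omega)
    rw [mul_assoc, tbar_mul_self hi hij, mul_one] at key
    have := tbarObstructions_nonneg N i j (w * tbar i j)
    constructor
    · intro h
      split_ifs at key <;> omega
    · rintro ⟨h, -⟩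
      omega
  · have := tbarObstructions_nonneg N i j w
    rw [invCount_mul_tbar hw hi hij hjN hpos]
    constructor
    · intro h
      have hneg : w i < 0 ∨ w j < 0 := by
        by_contra hneg
        rw [if_neg hneg] at h
        omega
      rw [if_pos hneg] at h
      exact ⟨by omega, hneg,
        (tbarObstructions_eq_zero_iff hi hij hjN hneg).1 (by omega)⟩
    · rintro ⟨-, hneg, hobs⟩
      rw [if_pos hneg, (tbarObstructions_eq_zero_iff hi hij hjN hneg).2 hobs]
      ring

end Covering

/-- Billey's covering criterion: `ℓ(w t̄_{ij}) = ℓ(w) + 1` iff (i) `-w_i < w_j`,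
(ii) `w_i < 0` or `w_j < 0`, and (iii) there is no `p < i` with
`-w_j < w_p < w_i` and no `p < j` with `-w_i < w_p < w_j`. -/
theorem length_mul_tbar (π : Equiv.Perm ℤ) (hπ : IsSignedPerm π)
    (i j : ℤ) (hi : 0 < i) (hij : i < j) :
    lenC (π * tbar i j) = lenC π + 1 ↔
      (-π i < π j ∧ (π i < 0 ∨ π j < 0) ∧
        (∀ p : ℤ, 0 < p → p < i → ¬(-π j < π p ∧ π p < π i)) ∧
        (∀ p : ℤ, 0 < p → p < j → ¬(-π i < π p ∧ π p < π j))) := by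
  have hodd : (⇑π).Odd := hπ.1
  obtain ⟨N₀, hN₀⟩ := hπ.2
  set N : ℤ := max N₀ j
  have hjN : j ≤ N := le_max_right _ _
  have hfix : FixedBeyond N π := fun k hk => hN₀ k ((le_max_left _ _).trans_lt hk)
  have hlen := lenC_eq_invCount hodd (by omega) hfix
  have hlen' := lenC_eq_invCount (hodd.perm_mul (tbar_odd hi hij)) (by omega)
    (hfix.mul (tbar_fixedBeyond hi hij hjN))
  rw [← invCount_mul_tbar_eq_add_one_iff hodd hi hij hjN]
  omega
end
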